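/- For a check node of degree d_c ≥ 3, computing the box-plus of d_c − 1 inputs by iterated pairwise box-plus operations yields an output whose magnitude differs from the min-sum output magnitude min_i |x_i| by at most ⌈log₂(d_c − 1)⌉·log 2: specifically, if all inputs x_1, ..., x_{d_c−1} are positive, then min_i x_i ≥ x_1 ⊞ ··· ⊞ x_{d_c−1} ≥ min_i x_i − ⌈log₂(d_c−1)⌉·log 2, provided the right-hand side quantity counts one correction of magnitude < log 2 per pairwise operation along any balanced binary combining tree of depth ⌈log₂(d_c−1)⌉. -/

import Mathlib

/-!
Writing `t x = tanh (x / 2)`, the box-plus operator is the tanh rule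
`x ⊞ y = 2 artanh (t x * t y)`, so the iterated box-plus of `x₁, …, xₙ` is `2 artanh (∏ t xᵢ)`.
For positive inputs with minimum `m` the product lies between `t m ^ n` and `t m`, and since
`2 artanh (s²) ≥ 2 artanh s - log 2`, each of the `⌈log₂ n⌉` squarings needed to pass from
`t m` to `t m ^ (2 ^ ⌈log₂ n⌉) ≤ t m ^ n` costs at most `log 2`.
-/

/-- Box-plus operator x ⊞ y = log((1+e^{x+y})/(e^x+e^y)). -/
noncomputable def boxplus (x y : ℝ) : ℝ :=
  Real.log ((1 + Real.exp (x + y)) / (Real.exp x + Real.exp y))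

/-- Iterated box-plus of a nonempty list of inputs. -/
noncomputable def boxplusList : List ℝ → ℝ
  | [] => 0
  | [a] => a
  | a :: b :: rest => boxplus a (boxplusList (b :: rest))

namespace List

variable {α R : Type*} [CommMonoidWithZero R] [PartialOrder R] [ZeroLEOneClass R] [PosMulMono R]

theorem pow_length_le_prod_map {l : List α} {f : α → R} {c : R} (hc : 0 ≤ c)
    (h : ∀ a ∈ l, c ≤ f a) : c ^ l.length ≤ (l.map f).prod := by
  simpa [map_const', prod_replicate] using prod_map_le_prod_map₀ (fun _ => c) f (fun _ _ => hc) h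

theorem prod_map_le_of_mem {l : List α} {f : α → R} {b : α} (hb : b ∈ l)
    (h0 : ∀ a ∈ l, 0 ≤ f a) (h1 : ∀ a ∈ l, f a ≤ 1) : (l.map f).prod ≤ f b := by
  classical
  have hrest : ((l.erase b).map f).prod ≤ 1 := by
    simpa [map_const', prod_replicate] using
      prod_map_le_prod_map₀ f (fun _ => 1) (fun a ha => h0 a (mem_of_mem_erase ha))
        (fun a ha => h1 a (mem_of_mem_erase ha))
  rw [((perm_cons_erase hb).map f).prod_eq, map_cons, prod_cons]
  exact mul_le_of_le_one_right (h0 b hb) hrest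

end List

namespace Real

theorem tanh_le_tanh {x y : ℝ} (h : x ≤ y) : tanh x ≤ tanh y := by
  have hmem (z : ℝ) : tanh z ∈ Set.Ioo (-1) 1 := ⟨neg_one_lt_tanh z, tanh_lt_one z⟩
  rwa [← artanh_le_artanh_iff (hmem x) (hmem y), artanh_tanh, artanh_tanh]

theorem tanh_nonneg {x : ℝ} (hx : 0 ≤ x) : 0 ≤ tanh x :=
  tanh_zero ▸ tanh_le_tanh hx

theorem tanh_half (x : ℝ) : tanh (x / 2) = (exp x - 1) / (exp x + 1) := by
  have hx : exp x = exp (x / 2) * exp (x / 2) := by rw [← exp_add, add_halves]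
  rw [tanh_eq, exp_neg, hx]
  field_simp

/-- Exponentiated, this is `(1 + s) / (1 - s) = (1 + s)² / (1 - s²) ≤ 2 (1 + s²) / (1 - s²)`,
i.e. `(1 - s)² ≥ 0`. -/
theorem artanh_sub_le_artanh_sq {s : ℝ} (hs : s ∈ Set.Ioo (-1) 1) :
    artanh s - log 2 / 2 ≤ artanh (s ^ 2) := by
  obtain ⟨hs₀, hs₁⟩ := hs
  have hsq : s ^ 2 < 1 := by nlinarith
  rw [artanh_eq_half_log ⟨hs₀.le, hs₁.le⟩, artanh_eq_half_log ⟨by nlinarith, hsq.le⟩]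
  suffices log ((1 + s) / (1 - s)) ≤ log (2 * ((1 + s ^ 2) / (1 - s ^ 2))) by
    rw [log_mul two_ne_zero (by positivity)] at this
    linarith
  apply log_le_log (div_pos (by linarith) (by linarith))
  rw [← mul_div_assoc, div_le_div_iff₀ (by linarith) (by linarith)]
  nlinarith [mul_nonneg (sub_nonneg.mpr hs₁.le) (sq_nonneg (1 - s))]

theorem artanh_sub_le_artanh_pow_two_pow (k : ℕ) {s : ℝ} (hs : s ∈ Set.Ioo (-1) 1) :
    artanh s - k * (log 2 / 2) ≤ artanh (s ^ 2 ^ k) := by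
  induction k with
  | zero => simp
  | succ k ih =>
    have hpow : |s ^ 2 ^ k| < 1 := by
      rw [abs_pow]
      exact pow_lt_one₀ (abs_nonneg s) (abs_lt.mpr hs) (by positivity)
    have hsq := artanh_sub_le_artanh_sq (abs_lt.mp hpow)
    rw [← pow_mul, ← pow_succ] at hsq
    push_cast
    linarith

end Real

open Real

theorem tanh_half_boxplus (x y : ℝ) :
    tanh (boxplus x y / 2) = tanh (x / 2) * tanh (y / 2) := by
  have hexp : exp (boxplus x y) = (1 + exp x * exp y) / (exp x + exp y) := by
    rw [boxplus, exp_log (by positivity), exp_add]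
  rw [tanh_half, tanh_half, tanh_half, hexp]
  field_simp
  ring

theorem tanh_half_boxplusList {l : List ℝ} (hl : l ≠ []) :
    tanh (boxplusList l / 2) = (l.map fun a => tanh (a / 2)).prod := by
  induction l with
  | nil => exact absurd rfl hl
  | cons a t ih =>
    cases t with
    | nil => simp [boxplusList]
    | cons b r =>
      rw [boxplusList, tanh_half_boxplus, ih (List.cons_ne_nil b r)]
      simp only [List.map_cons, List.prod_cons]

theorem boxplusList_eq_two_mul_artanh {l : List ℝ} (hl : l ≠ []) :
    boxplusList l = 2 * artanh (l.map fun a => tanh (a / 2)).prod := by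
  rw [← tanh_half_boxplusList hl, artanh_tanh]
  ring

theorem checknode_boxplus_vs_minsum_general (dc : ℕ)
    (l : List ℝ) (hlen : l.length = dc - 1) (hpos : ∀ a ∈ l, 0 < a)
    (m : ℝ) (hmem : m ∈ l) (hmin : ∀ a ∈ l, m ≤ a) :
    m ≥ boxplusList l ∧
      boxplusList l ≥ m - (Nat.clog 2 (dc - 1) : ℝ) * Real.log 2 := by
  set k := Nat.clog 2 (dc - 1)
  set t := tanh (m / 2)
  set P := (l.map fun a => tanh (a / 2)).prod
  have hbox : boxplusList l = 2 * artanh P :=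
    boxplusList_eq_two_mul_artanh (List.ne_nil_of_mem hmem)
  have hm : m = 2 * artanh t := by rw [artanh_tanh]; ring
  have ht₀ : 0 ≤ t := tanh_nonneg (by linarith [hpos m hmem])
  have ht₁ : t < 1 := tanh_lt_one _
  have hPt : P ≤ t := List.prod_map_le_of_mem hmem
    (fun a ha => tanh_nonneg (by linarith [hpos a ha])) (fun a _ => (tanh_lt_one _).le)
  have htP : t ^ 2 ^ k ≤ P := calc
    t ^ 2 ^ k ≤ t ^ l.length :=
      pow_le_pow_of_le_one ht₀ ht₁.le (hlen ▸ Nat.le_pow_clog one_lt_two _)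
    _ ≤ P := List.pow_length_le_prod_map ht₀ fun a ha => tanh_le_tanh (by linarith [hmin a ha])
  have htk₀ : 0 ≤ t ^ 2 ^ k := pow_nonneg ht₀ _
  constructor
  · rw [hbox, hm, ge_iff_le, mul_le_mul_iff_right₀ two_pos]
    exact artanh_le_artanh (by linarith) ht₁ hPt
  · have hsquare := artanh_sub_le_artanh_pow_two_pow k ⟨by linarith, ht₁⟩
    have hmono := artanh_le_artanh (by linarith) (hPt.trans_lt ht₁) htP
    rw [hbox, hm]
    linarith

theorem checknode_boxplus_vs_minsum (dc : ℕ) (hdc : 3 ≤ dc)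
    (l : List ℝ) (hlen : l.length = dc - 1) (hpos : ∀ a ∈ l, 0 < a)
    (m : ℝ) (hmem : m ∈ l) (hmin : ∀ a ∈ l, m ≤ a) :
    m ≥ boxplusList l ∧
      boxplusList l ≥ m - (Nat.clog 2 (dc - 1) : ℝ) * Real.log 2 :=
  checknode_boxplus_vs_minsum_general dc l hlen hpos m hmem hmin
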